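/- Let K be a commutative ring, S = K[x_1,…,x_n], and φ: S → S a flat K-algebra homomorphism with φ(x_i) = s_i·x_i for elements s_i ∈ S. There is a short exact sequence of chain complexes of left S[Θ;φ]-modules 0 → S[Θ;φ] ⊗_S K_•(S; x_1,…,x_n) → FK_•(x_1,…,x_n) → (S[Θ;φ] ⊗_S K_•(S; φ(x_1),…,φ(x_n)))[1] → 0, where K_•(S; f_1,…,f_n) denotes the Koszul chain complex of S on f_1,…,f_n, the tensor products use the right S-module structure of S[Θ;φ], and [1] denotes the shift of the chain complex by one degree. -/

import Mathlib

structure LeftSkewPolynomialRing (A : Type*) [CommRing A] (φ : A →+* A)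
    (B : Type*) [Ring B] where
  ι : A →+* B
  θ : B
  theta_mul : ∀ a : A, θ * ι a = ι (φ a) * θ
  basis : Function.Bijective fun f : ℕ →₀ A => f.sum fun i a => ι a * θ ^ i

noncomputable section

namespace PhiKoszulZ

variable {S : Type*} [CommRing S] {φ : S →+* S} {B : Type*} [Ring B] {n : ℕ}

/-- The left `B`-linear map `B → N` sending `b` to `b • v`. -/
def toSpan {N : Type*} [AddCommGroup N] [Module B N] (v : N) : B →ₗ[B] N where
  toFun b := b • v
  map_add' a b := add_smul a b v
  map_smul' a b := mul_smul a b v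

/-- Extension of a family `s : Fin n → S` to `Fin (n+1)`, with value `1` at the last
index (which corresponds to the extra basis vector `u`). -/
def extOne (s : Fin n → S) (j : Fin (n + 1)) : S :=
  if h : (j : ℕ) < n then s ⟨j, h⟩ else 1

/-- The degree-`l` term `FK_l` of the `φ`-Koszul complex (indexed over `ℤ`): the free
left `S[Θ;φ]`-module on the `l`-element subsets of `{e_1, …, e_n, u}` (where `u`
corresponds to the last element of `Fin (n+1)`); it vanishes for `l < 0` and
`l > n + 1`. -/
abbrev FK (B : Type*) [Ring B] (n : ℕ) (l : ℤ) : Type _ :=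
  {t : Finset (Fin (n + 1)) // (t.card : ℤ) = l} →₀ B

/-- The degree-`l` term of the base-changed Koszul complex `S[Θ;φ] ⊗_S K_•(S; f)`
(indexed over `ℤ`): the free left `S[Θ;φ]`-module on the `l`-element subsets of
`{e_1, …, e_n}`. -/
abbrev BK (B : Type*) [Ring B] (n : ℕ) (l : ℤ) : Type _ :=
  {t : Finset (Fin n) // (t.card : ℤ) = l} →₀ B

/-- Coefficients of the `φ`-Koszul differential. -/
def coeff (sk : LeftSkewPolynomialRing S φ B) (x s : Fin n → S)
    (T : Finset (Fin (n + 1))) (i : Fin (n + 1)) : B :=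
  if h : (i : ℕ) < n then
    (if Fin.last n ∈ T then sk.ι (φ (x ⟨i, h⟩)) else sk.ι (x ⟨i, h⟩))
  else sk.θ - sk.ι (∏ j ∈ T.erase (Fin.last n), extOne s j)

/-- Image of the basis element `T` under the `φ`-Koszul differential. -/
def tgt (sk : LeftSkewPolynomialRing S φ B) (x s : Fin n → S) (l : ℤ)
    (T : {t : Finset (Fin (n + 1)) // (t.card : ℤ) = l}) : FK B n (l - 1) :=
  ∑ i ∈ T.1.attach,
    ((-1 : ℤ) ^ (T.1.filter fun j => j < i.1).card) •
      Finsupp.single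
        ⟨T.1.erase i.1, by
          have h1 : 1 ≤ T.1.card := Finset.card_pos.mpr ⟨i.1, i.2⟩
          rw [Finset.card_erase_of_mem i.2, Nat.cast_sub h1, T.2, Nat.cast_one]⟩
        (coeff sk x s T.1 i.1)

/-- The `φ`-Koszul differential `∂_l : FK_l → FK_{l-1}`. -/
def FKd (sk : LeftSkewPolynomialRing S φ B) (x s : Fin n → S) (l : ℤ) :
    FK B n l →ₗ[B] FK B n (l - 1) :=
  Finsupp.lsum ℕ fun T => toSpan (tgt sk x s l T)

/-- Image of the basis element `T` under the base-changed Koszul differential of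
`S[Θ;φ] ⊗_S K_•(S; f)`. -/
def ktgt (sk : LeftSkewPolynomialRing S φ B) (f : Fin n → S) (l : ℤ)
    (T : {t : Finset (Fin n) // (t.card : ℤ) = l}) : BK B n (l - 1) :=
  ∑ i ∈ T.1.attach,
    ((-1 : ℤ) ^ (T.1.filter fun j => j < i.1).card) •
      Finsupp.single
        ⟨T.1.erase i.1, by
          have h1 : 1 ≤ T.1.card := Finset.card_pos.mpr ⟨i.1, i.2⟩
          rw [Finset.card_erase_of_mem i.2, Nat.cast_sub h1, T.2, Nat.cast_one]⟩
        (sk.ι (f i.1))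

/-- The differential of the base-changed Koszul complex `S[Θ;φ] ⊗_S K_•(S; f)`. -/
def BKd (sk : LeftSkewPolynomialRing S φ B) (f : Fin n → S) (l : ℤ) :
    BK B n l →ₗ[B] BK B n (l - 1) :=
  Finsupp.lsum ℕ fun T => toSpan (ktgt sk f l T)

/-- The inclusion of index sets: an `l`-element subset of `{e_1,…,e_n}` is an
`l`-element subset of `{e_1,…,e_n,u}`. -/
def up (n : ℕ) (l : ℤ) (T : {t : Finset (Fin n) // (t.card : ℤ) = l}) :
    {t : Finset (Fin (n + 1)) // (t.card : ℤ) = l} :=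
  ⟨T.1.map Fin.castSuccEmb, by rw [Finset.card_map]; exact T.2⟩

/-- The degreewise inclusion `S[Θ;φ] ⊗_S K_l(S; x) → FK_l` (a wedge of `e`'s is a
wedge of `e`'s). -/
def inj (n : ℕ) (l : ℤ) : BK B n l →ₗ[B] FK B n l :=
  Finsupp.lmapDomain B B (up n l)

/-- Adjoining `u` to an `(l-1)`-element subset of `{e_1,…,e_n}` gives an `l`-element
subset of `{e_1,…,e_n,u}`. -/
def lift (n : ℕ) (l : ℤ) (T : {t : Finset (Fin n) // (t.card : ℤ) = l - 1}) :
    {t : Finset (Fin (n + 1)) // (t.card : ℤ) = l} :=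
  ⟨insert (Fin.last n) (T.1.map Fin.castSuccEmb), by
    have hnot : Fin.last n ∉ T.1.map Fin.castSuccEmb := by
      simp only [Finset.mem_map]
      rintro ⟨i, -, hi⟩
      exact absurd hi (Fin.castSucc_lt_last i).ne
    rw [Finset.card_insert_of_notMem hnot, Finset.card_map, Nat.cast_add,
      Nat.cast_one, T.2]
    ring⟩

lemma lift_injective (n : ℕ) (l : ℤ) : Function.Injective (lift n l) := by
  intro T1 T2 h
  have hnot : ∀ T : {t : Finset (Fin n) // (t.card : ℤ) = l - 1},
      Fin.last n ∉ T.1.map Fin.castSuccEmb := by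
    intro T
    simp only [Finset.mem_map]
    rintro ⟨i, -, hi⟩
    exact absurd hi (Fin.castSucc_lt_last i).ne
  have h' := congrArg (fun t => Finset.erase t.1 (Fin.last n)) h
  simp only [lift, Finset.erase_insert (hnot T1), Finset.erase_insert (hnot T2)] at h'
  exact Subtype.ext (Finset.map_injective Fin.castSuccEmb h')

/-- The degreewise projection `FK_l → (S[Θ;φ] ⊗_S K_•(S; φ(x))[1])_l = S[Θ;φ] ⊗_S
K_{l-1}(S; φ(x))` (a wedge `e_J ∧ u` is sent to `e_J`; wedges without `u` are sent
to `0`). -/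
def proj (n : ℕ) (l : ℤ) : FK B n l →ₗ[B] BK B n (l - 1) :=
  Finsupp.lcomapDomain (lift n l) (lift_injective n l)

end PhiKoszulZ

end

/-!
The basis of `FK_l` consists of the `l`-subsets of `{e_1, …, e_n, u}`. Those avoiding `u` are
the image of the basis of `S[Θ;φ] ⊗ K_l(x)` under `up`, those containing `u` are the image of
the basis of `S[Θ;φ] ⊗ K_{l-1}(φ x)` under `lift`; both index maps are injective with
complementary ranges, so extension by zero and restriction give a split short exact sequence of
free modules in each degree. The chain-map identities are checked on basis elements: on a wedge
without `u` the `φ`-Koszul differential is the Koszul differential on `x`, and on `e_J ∧ u` the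
term `(Θ - s_J) e_J` loses `u` and dies under the projection, while the remaining terms carry
the coefficients `φ(x_j)` with the Koszul signs, since `u` comes last.
-/

theorem Finsupp.exact_lmapDomain_lcomapDomain {α β γ R M : Type*} [Semiring R]
    [AddCommMonoid M] [Module R M] {f : α → γ} {g : β → γ} (hf : Function.Injective f)
    (hg : Function.Injective g) (hfg : IsCompl (Set.range f) (Set.range g)) :
    Function.Exact (Finsupp.lmapDomain M R f) (Finsupp.lcomapDomain (M := M) (R := R) g hg) := by
  intro y
  change Finsupp.comapDomain g y hg.injOn = 0 ↔ y ∈ Set.range (Finsupp.mapDomain f)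
  rw [Finsupp.mem_range_mapDomain_iff f hf, ← hfg.symm.compl_eq, DFunLike.ext_iff]
  simp [Finsupp.comapDomain_apply]

namespace PhiKoszulZ

variable {S : Type*} [CommRing S] {φ : S →+* S} {B : Type*} [Ring B] {n : ℕ}

lemma coe_card_erase {α : Type*} [DecidableEq α] {l : ℤ} (T : {t : Finset α // (t.card : ℤ) = l})
    {i : α} (hi : i ∈ T.1) : ((T.1.erase i).card : ℤ) = l - 1 := by
  rw [Finset.card_erase_of_mem hi, Nat.cast_pred (Finset.card_pos.mpr ⟨i, hi⟩), T.2]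

@[simp]
lemma up_coe (l : ℤ) (T : {t : Finset (Fin n) // (t.card : ℤ) = l}) :
    (up n l T).1 = T.1.map Fin.castSuccEmb :=
  rfl

@[simp]
lemma lift_coe (l : ℤ) (T : {t : Finset (Fin n) // (t.card : ℤ) = l - 1}) :
    (lift n l T).1 = insert (Fin.last n) (T.1.map Fin.castSuccEmb) :=
  rfl

lemma last_notMem_map_castSuccEmb (t : Finset (Fin n)) :
    Fin.last n ∉ t.map Fin.castSuccEmb := by
  simp [Fin.castSucc_ne_last]

lemma exists_map_castSuccEmb_eq {t : Finset (Fin (n + 1))} (ht : Fin.last n ∉ t) :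
    ∃ u : Finset (Fin n), u.map Fin.castSuccEmb = t := by
  have ht' : t ⊆ Finset.univ.map Fin.castSuccEmb := fun i hi => by
    obtain ⟨j, rfl⟩ := Fin.exists_castSucc_eq.mpr fun h => ht (h ▸ hi)
    simp
  obtain ⟨u, -, hu⟩ := Finset.subset_map_iff.mp ht'
  exact ⟨u, hu.symm⟩

lemma up_injective (n : ℕ) (l : ℤ) : Function.Injective (up n l) := fun _ _ h =>
  Subtype.ext (Finset.map_injective Fin.castSuccEmb (congrArg Subtype.val h))

lemma range_up (n : ℕ) (l : ℤ) :
    Set.range (up n l) = {T | Fin.last n ∉ T.1} := by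
  ext T
  refine ⟨?_, fun hT => ?_⟩
  · rintro ⟨U, rfl⟩
    exact last_notMem_map_castSuccEmb U.1
  · obtain ⟨u, hu⟩ := exists_map_castSuccEmb_eq hT
    exact ⟨⟨u, by rw [← T.2, ← hu, Finset.card_map]⟩, Subtype.ext hu⟩

lemma range_lift (n : ℕ) (l : ℤ) :
    Set.range (lift n l) = {T | Fin.last n ∈ T.1} := by
  ext T
  refine ⟨?_, fun hT => ?_⟩
  · rintro ⟨U, rfl⟩
    exact Finset.mem_insert_self _ _
  · obtain ⟨u, hu⟩ := exists_map_castSuccEmb_eq (T.1.notMem_erase (Fin.last n))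
    refine ⟨⟨u, by rw [← Finset.card_map, hu, coe_card_erase T hT]⟩, Subtype.ext ?_⟩
    rw [lift_coe, hu, Finset.insert_erase hT]

lemma isCompl_range_up_range_lift (n : ℕ) (l : ℤ) :
    IsCompl (Set.range (up n l)) (Set.range (lift n l)) := by
  rw [range_up, range_lift, ← Set.compl_ofPred]
  exact isCompl_compl.symm

lemma inj_injective (l : ℤ) : Function.Injective (inj (B := B) n l) :=
  Finsupp.mapDomain_injective (up_injective n l)

lemma proj_surjective (l : ℤ) : Function.Surjective (proj (B := B) n l) :=
  (Finsupp.leftInverse_lcomapDomain_mapDomain _ (lift_injective n l)).surjective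

lemma exact_inj_proj (l : ℤ) : Function.Exact (inj (B := B) n l) (proj (B := B) n l) :=
  Finsupp.exact_lmapDomain_lcomapDomain (up_injective n l) (lift_injective n l)
    (isCompl_range_up_range_lift n l)

lemma inj_single {l : ℤ} (T : {t : Finset (Fin n) // (t.card : ℤ) = l}) (b : B) :
    inj n l (Finsupp.single T b) = Finsupp.single (up n l T) b :=
  Finsupp.mapDomain_single

lemma proj_single_lift {l : ℤ} (U : {t : Finset (Fin n) // (t.card : ℤ) = l - 1}) (b : B) :
    proj n l (Finsupp.single (lift n l U) b) = Finsupp.single U b :=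
  Finsupp.comapDomain_single _ _ _ _

lemma proj_single_of_coe_eq {l : ℤ} (T : {t : Finset (Fin (n + 1)) // (t.card : ℤ) = l})
    (U : {t : Finset (Fin n) // (t.card : ℤ) = l - 1})
    (h : T.1 = insert (Fin.last n) (U.1.map Fin.castSuccEmb)) (b : B) :
    proj n l (Finsupp.single T b) = Finsupp.single U b := by
  obtain rfl : T = lift n l U := Subtype.ext h
  exact proj_single_lift U b

lemma proj_single_of_last_notMem {l : ℤ} (T : {t : Finset (Fin (n + 1)) // (t.card : ℤ) = l})
    (hT : Fin.last n ∉ T.1) (b : B) : proj n l (Finsupp.single T b) = 0 := by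
  ext U
  exact Finsupp.single_eq_of_ne fun h => hT (h ▸ Finset.mem_insert_self _ _)

lemma card_filter_lt_castSucc (t : Finset (Fin n)) (i : Fin n) :
    ((t.map Fin.castSuccEmb).filter (· < i.castSucc)).card = (t.filter (· < i)).card := by
  simp [Finset.filter_map, Function.comp_def]

lemma card_filter_lt_castSucc_insert_last (t : Finset (Fin n)) (i : Fin n) :
    ((insert (Fin.last n) (t.map Fin.castSuccEmb)).filter (· < i.castSucc)).card =
      (t.filter (· < i)).card := by
  rw [Finset.filter_insert, if_neg (Fin.castSucc_lt_last i).asymm, card_filter_lt_castSucc]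

variable (sk : LeftSkewPolynomialRing S φ B) (x s : Fin n → S)

lemma FKd_single (l : ℤ) (T : {t : Finset (Fin (n + 1)) // (t.card : ℤ) = l}) (b : B) :
    FKd sk x s l (Finsupp.single T b) = b • tgt sk x s l T :=
  Finsupp.lsum_single _ _ _ _

lemma BKd_single (l : ℤ) (T : {t : Finset (Fin n) // (t.card : ℤ) = l}) (b : B) :
    BKd sk x l (Finsupp.single T b) = b • ktgt sk x l T :=
  Finsupp.lsum_single _ _ _ _

lemma coeff_castSucc (T : Finset (Fin (n + 1))) (i : Fin n) :
    coeff sk x s T i.castSucc = if Fin.last n ∈ T then sk.ι (φ (x i)) else sk.ι (x i) := by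
  simp [coeff]

lemma inj_ktgt (l : ℤ) (T : {t : Finset (Fin n) // (t.card : ℤ) = l}) :
    inj n (l - 1) (ktgt sk x l T) = tgt sk x s l (up n l T) := by
  rw [ktgt, map_sum, tgt]
  refine Finset.sum_bij (fun i _ => ⟨i.1.castSucc, Finset.mem_map_of_mem _ i.2⟩)
    (fun _ _ => Finset.mem_attach _ _) (fun i _ j _ h => ?_) (fun j _ => ?_) (fun i _ => ?_)
  · exact Subtype.ext (Fin.castSucc_injective n (congrArg Subtype.val h))
  · obtain ⟨i, hi, hij⟩ := Finset.mem_map.mp (j.2 : j.1 ∈ T.1.map Fin.castSuccEmb)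
    exact ⟨⟨i, hi⟩, Finset.mem_attach _ _, Subtype.ext hij⟩
  · rw [map_zsmul, inj_single]
    congr 2
    · exact (card_filter_lt_castSucc T.1 i.1).symm
    · exact Subtype.ext (Finset.map_erase _ _ _)
    · simp [coeff_castSucc]

lemma proj_tgt_lift (l : ℤ) (U : {t : Finset (Fin n) // (t.card : ℤ) = l - 1}) :
    proj n (l - 1) (tgt sk x s l (lift n l U)) = ktgt sk (fun i => φ (x i)) (l - 1) U := by
  rw [tgt, map_sum, ktgt, ← Finset.sum_filter_of_ne (p := fun i => i.1 ≠ Fin.last n)]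
  · refine (Finset.sum_bij (fun i _ => ⟨i.1.castSucc, Finset.mem_insert_of_mem
      (Finset.mem_map_of_mem _ i.2)⟩) (fun i _ => ?_) (fun i _ j _ h => ?_) (fun j hj => ?_)
      (fun i _ => ?_)).symm
    · exact Finset.mem_filter.mpr ⟨Finset.mem_attach _ _, Fin.castSucc_ne_last _⟩
    · exact Subtype.ext (Fin.castSucc_injective n (congrArg Subtype.val h))
    · obtain ⟨i, hi, hij⟩ := Finset.mem_map.mp ((Finset.mem_insert.mp j.2).resolve_left
        (Finset.mem_filter.mp hj).2)
      exact ⟨⟨i, hi⟩, Finset.mem_attach _ _, Subtype.ext hij⟩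
    · rw [map_zsmul, proj_single_of_coe_eq _ ⟨U.1.erase i.1, coe_card_erase U i.2⟩]
      · congr 2
        · exact (card_filter_lt_castSucc_insert_last U.1 i.1).symm
        · simp [coeff_castSucc]
      · simp [Finset.map_erase, Finset.erase_insert_of_ne (Fin.castSucc_ne_last i.1).symm]
  · intro i _ hne hlast
    apply hne
    rw [map_zsmul, proj_single_of_last_notMem, smul_zero]
    simp [hlast]

lemma proj_tgt_of_last_notMem (l : ℤ) (T : {t : Finset (Fin (n + 1)) // (t.card : ℤ) = l})
    (hT : Fin.last n ∉ T.1) : proj n (l - 1) (tgt sk x s l T) = 0 := by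
  rw [tgt, map_sum]
  refine Finset.sum_eq_zero fun i _ => ?_
  rw [map_zsmul, proj_single_of_last_notMem _ (fun h => hT (Finset.mem_of_mem_erase h)),
    smul_zero]

lemma inj_comp_BKd (l : ℤ) :
    (inj n (l - 1)).comp (BKd sk x l) = (FKd sk x s l).comp (inj n l) := by
  refine Finsupp.lhom_ext fun T b => ?_
  simp only [LinearMap.comp_apply, inj_single, BKd_single, FKd_single, map_smul,
    inj_ktgt sk x s]

lemma proj_comp_FKd (l : ℤ) :
    (proj n (l - 1)).comp (FKd sk x s l) =
      (BKd sk (fun i => φ (x i)) (l - 1)).comp (proj n l) := by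
  refine Finsupp.lhom_ext fun T b => ?_
  rw [LinearMap.comp_apply, LinearMap.comp_apply, FKd_single, map_smul]
  by_cases hT : Fin.last n ∈ T.1
  · obtain ⟨U, rfl⟩ : T ∈ Set.range (lift n l) := by rwa [range_lift]
    rw [proj_single_lift, BKd_single, proj_tgt_lift]
  · rw [proj_single_of_last_notMem T hT, map_zero, proj_tgt_of_last_notMem sk x s l T hT,
      smul_zero]

end PhiKoszulZ

open PhiKoszulZ MvPolynomial

theorem phiKoszul_short_exact_sequence_general
    {K : Type*} [CommRing K] {n : ℕ}
    (φ : MvPolynomial (Fin n) K →ₐ[K] MvPolynomial (Fin n) K)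
    (s : Fin n → MvPolynomial (Fin n) K)
    {B : Type*} [Ring B]
    (sk : LeftSkewPolynomialRing (MvPolynomial (Fin n) K)
      (φ : MvPolynomial (Fin n) K →+* MvPolynomial (Fin n) K) B) :
    ∀ l : ℤ,
      -- `0 → (S[Θ;φ] ⊗ K_•(x))_l → FK_l → ((S[Θ;φ] ⊗ K_•(φ x))[1])_l → 0` is exact:
      Function.Injective (inj (B := B) n l) ∧
      Function.Surjective (proj (B := B) n l) ∧
      Function.Exact (inj (B := B) n l) (proj (B := B) n l) ∧
      -- the inclusions commute with the differentials:
      (inj n (l - 1)).comp (BKd sk X l) = (FKd sk X s l).comp (inj n l) ∧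
      -- the projections commute with the differentials (the differential of the
      -- shifted complex being that of `S[Θ;φ] ⊗ K_•(S; φ(x))`):
      (proj n (l - 1)).comp (FKd sk X s l) =
        (BKd sk (fun i => φ (X i)) (l - 1)).comp (proj n l) := fun l =>
  ⟨inj_injective l, proj_surjective l, exact_inj_proj l, inj_comp_BKd sk X s l,
    proj_comp_FKd sk X s l⟩

/-- Let `K` be a commutative ring, `S = K[x_1,…,x_n]`, and `φ : S → S` a flat
`K`-algebra homomorphism with `φ(x_i) = s_i·x_i`.  There is a short exact sequence of
chain complexes of left `S[Θ;φ]`-modules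
`0 → S[Θ;φ] ⊗_S K_•(S; x) → FK_•(x) → (S[Θ;φ] ⊗_S K_•(S; φ(x)))[1] → 0` :
in each degree `l` the canonical inclusion and projection are injective resp. surjective
and exact, and they commute with the differentials. -/
theorem phiKoszul_short_exact_sequence
    {K : Type*} [CommRing K] {n : ℕ}
    (φ : MvPolynomial (Fin n) K →ₐ[K] MvPolynomial (Fin n) K)
    (hflat : (φ : MvPolynomial (Fin n) K →+* MvPolynomial (Fin n) K).Flat)
    (s : Fin n → MvPolynomial (Fin n) K)
    (hs : ∀ i, φ (X i) = s i * X i)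
    {B : Type*} [Ring B]
    (sk : LeftSkewPolynomialRing (MvPolynomial (Fin n) K)
      (φ : MvPolynomial (Fin n) K →+* MvPolynomial (Fin n) K) B) :
    ∀ l : ℤ,
      -- `0 → (S[Θ;φ] ⊗ K_•(x))_l → FK_l → ((S[Θ;φ] ⊗ K_•(φ x))[1])_l → 0` is exact:
      Function.Injective (inj (B := B) n l) ∧
      Function.Surjective (proj (B := B) n l) ∧
      Function.Exact (inj (B := B) n l) (proj (B := B) n l) ∧
      -- the inclusions commute with the differentials:
      (inj n (l - 1)).comp (BKd sk X l) = (FKd sk X s l).comp (inj n l) ∧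
      -- the projections commute with the differentials (the differential of the
      -- shifted complex being that of `S[Θ;φ] ⊗ K_•(S; φ(x))`):
      (proj n (l - 1)).comp (FKd sk X s l) =
        (BKd sk (fun i => φ (X i)) (l - 1)).comp (proj n l) :=
  phiKoszul_short_exact_sequence_general φ s sk
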